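/- Consider the equation (z + w²)·dw/dz = z² + μ·w with μ ∈ ℚ and 1/2 < μ < 2. Then (0,0) is algebraic critical: for every α ≠ 0 the equation has a local algebraic solution of the form w(z) = α·z^μ + (terms with strictly larger rational exponents), so there are infinitely many distinct nonconstant local algebraic solutions at (0,0). -/

import Mathlib

open MvPolynomial

noncomputable section

/-- Formal derivative of a power series. -/
def dSeries (φ : PowerSeries ℂ) : PowerSeries ℂ :=
  PowerSeries.mk fun k => ((k + 1 : ℕ) : ℂ) * PowerSeries.coeff (k + 1) φ

/-- The power series `Σ_k c(k/N) t^k` encoding the Puiseux series with coefficient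
function `c` after the substitution `z = t^N`. -/
def toSeries (N : ℕ) (c : ℚ → ℂ) : PowerSeries ℂ :=
  PowerSeries.mk fun k => c ((k : ℚ) / (N : ℚ))

/-- Substitute `z = t^N`, `w = φ(t)` into a bivariate polynomial (variable `0` is `z`,
variable `1` is `w`). -/
def substS (P : MvPolynomial (Fin 2) ℂ) (N : ℕ) (φ : PowerSeries ℂ) : PowerSeries ℂ :=
  MvPolynomial.aeval ![(PowerSeries.X : PowerSeries ℂ) ^ N, φ] P

/-- `c : ℚ → ℂ` encodes a formal Puiseux series `w(z) = Σ_q c(q)·z^q`, supported on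
strictly positive exponents with a common denominator `N`, which formally satisfies
the differential equation `Q(z,w)·dw/dz = P(z,w)` (after the substitution `z = t^N`
this reads `Q(t^N,φ(t))·φ'(t) = N·t^(N-1)·P(t^N,φ(t))`). -/
def IsPuiseuxSol (P Q : MvPolynomial (Fin 2) ℂ) (c : ℚ → ℂ) : Prop :=
  ∃ N : ℕ, 0 < N ∧ (∀ q : ℚ, c q ≠ 0 → 0 < q ∧ ∃ k : ℕ, q = (k : ℚ) / (N : ℚ)) ∧
    substS Q N (toSeries N c) * dSeries (toSeries N c) =
      (N : PowerSeries ℂ) * (PowerSeries.X : PowerSeries ℂ) ^ (N - 1) *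
        substS P N (toSeries N c)

/-- Shift the origin of coordinates to `(z0, w0)`. -/
def shiftP (P : MvPolynomial (Fin 2) ℂ) (z0 w0 : ℂ) : MvPolynomial (Fin 2) ℂ :=
  MvPolynomial.aeval ![(X 0 : MvPolynomial (Fin 2) ℂ) + C z0, (X 1 : MvPolynomial (Fin 2) ℂ) + C w0] P

/-- The set of nonconstant local algebraic solutions of `Q(z,w)·dw/dz = P(z,w)` at the
point `(z0, w0)`, encoded by their Puiseux coefficient functions in the shifted
variables. -/
def localSols (P Q : MvPolynomial (Fin 2) ℂ) (z0 w0 : ℂ) : Set (ℚ → ℂ) :=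
  {c | c ≠ 0 ∧ IsPuiseuxSol (shiftP P z0 w0) (shiftP Q z0 w0) c}

/-- The algebraic multiplicity `Mul(z0,w0)` of the equation `Q·dw/dz = P`:
the number of distinct nonconstant local algebraic solutions at `(z0,w0)`. -/
def mulAt (P Q : MvPolynomial (Fin 2) ℂ) (z0 w0 : ℂ) : ℕ∞ :=
  (localSols P Q z0 w0).encard

/-- `(z0,w0)` is algebraic critical for `Q·dw/dz = P`. -/
def IsAlgCritical (P Q : MvPolynomial (Fin 2) ℂ) (z0 w0 : ℂ) : Prop :=
  (localSols P Q z0 w0).Infinite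

/-- `w^d · P(z, 1/w)`. -/
def invW (P : MvPolynomial (Fin 2) ℂ) (d : ℕ) : MvPolynomial (Fin 2) ℂ :=
  ∑ m ∈ P.support, MvPolynomial.monomial
    (Finsupp.single (0 : Fin 2) (m 0) + Finsupp.single (1 : Fin 2) (d - m 1))
    (MvPolynomial.coeff m P)

/-- The algebraic multiplicity `Mul(z0,∞)` for the equation `Q·dw/dz = P`, i.e. the
multiplicity at `(z0,0)` of the equation `dw̄/dz = -w̄²·(P/Q)(z,1/w̄)` satisfied by
`w̄ = 1/w` (with numerator and denominator cleared by `w̄^d`). -/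
def mulAtInf (P Q : MvPolynomial (Fin 2) ℂ) (z0 : ℂ) : ℕ∞ :=
  mulAt (-((X 1 : MvPolynomial (Fin 2) ℂ) ^ 2 * invW P (max (P.degreeOf 1) (Q.degreeOf 1))))
    (invW Q (max (P.degreeOf 1) (Q.degreeOf 1))) z0 0

/-- `(z0,∞)` is algebraic critical for `Q·dw/dz = P`. -/
def IsAlgCriticalInf (P Q : MvPolynomial (Fin 2) ℂ) (z0 : ℂ) : Prop :=
  IsAlgCritical (-((X 1 : MvPolynomial (Fin 2) ℂ) ^ 2 * invW P (max (P.degreeOf 1) (Q.degreeOf 1))))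
    (invW Q (max (P.degreeOf 1) (Q.degreeOf 1))) z0 0

/-- `f` is a Darboux polynomial of the system `ż = A, ẇ = B` with cofactor `R`. -/
def IsDarboux (A B f R : MvPolynomial (Fin 2) ℂ) : Prop :=
  A * MvPolynomial.pderiv 0 f + B * MvPolynomial.pderiv 1 f = R * f

/-- `f` is strict: it has no factor of the form `z - z0` or `w - w0`. -/
def IsStrict (f : MvPolynomial (Fin 2) ℂ) : Prop :=
  ∀ a : ℂ, ¬((X 0 : MvPolynomial (Fin 2) ℂ) - C a ∣ f) ∧ ¬((X 1 : MvPolynomial (Fin 2) ℂ) - C a ∣ f)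

end

section Aux
open Finset

noncomputable def cubeS (f : ℕ → ℂ) (n : ℕ) : ℂ :=
  ∑ uv ∈ Finset.HasAntidiagonal.antidiagonal n,
    (∑ ij ∈ Finset.HasAntidiagonal.antidiagonal uv.1, f ij.1 * f ij.2) *
      (((uv.2 + 1 : ℕ) : ℂ) * f (uv.2 + 1))

noncomputable def aCoef (N p : ℕ) (α : ℂ) : ℕ → ℂ
  | m =>
    if m = p then α
    else ((if m = 2 * N then (N : ℂ) else 0) -
        cubeS (fun x => if _ : x < m then aCoef N p α x else 0) (m + N - 1)) /
      ((m : ℂ) - (p : ℂ))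
termination_by m => m
decreasing_by assumption

lemma aCoef_eq (N p : ℕ) (α : ℂ) (m : ℕ) (hm : m ≠ p) :
    aCoef N p α m = ((if m = 2 * N then (N : ℂ) else 0) -
        cubeS (fun x => if x < m then aCoef N p α x else 0) (m + N - 1)) /
      ((m : ℂ) - (p : ℂ)) := by
  rw [aCoef]; simp only [if_neg hm, dite_eq_ite]

lemma aCoef_p (N p : ℕ) (α : ℂ) : aCoef N p α p = α := by rw [aCoef]; simp

lemma cubeS_zero (n : ℕ) (f : ℕ → ℂ) (hf : ∀ x, f x = 0) : cubeS f n = 0 := by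
  simp [cubeS, hf]

lemma aCoef_vanish (N p : ℕ) (α : ℂ) (h2N : p < 2 * N) :
    ∀ m, m < p → aCoef N p α m = 0 := by
  intro m
  induction m using Nat.strong_induction_on with
  | _ m ih =>
    intro hmp
    rw [aCoef_eq N p α m hmp.ne, if_neg (by omega), cubeS_zero]
    · simp
    · intro x
      by_cases hx : x < m
      · simp only [if_pos hx, ih x hx (hx.trans hmp)]
      · simp [hx]

lemma aCoef_le (N p : ℕ) (α : ℂ) (h2N : p < 2 * N) {m : ℕ} (h : aCoef N p α m ≠ 0) :
    p ≤ m := by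
  by_contra hc
  exact h (aCoef_vanish N p α h2N m (by omega))

lemma cubeS_trunc (N p : ℕ) (α : ℂ) (hN : 0 < N) (hlow : N < 2 * p) (h2N : p < 2 * N) (m : ℕ) :
    cubeS (aCoef N p α) (m + N - 1) =
    cubeS (fun x => if x < m then aCoef N p α x else 0) (m + N - 1) := by
  set a := aCoef N p α with ha
  have key : ∀ i j k : ℕ, i + j + k = m + N →
      a i * a j * ((k : ℂ) * a k) =
      (if i < m then a i else 0) * (if j < m then a j else 0) *
        ((k : ℂ) * (if k < m then a k else 0)) := by
    intro i j k hsum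
    by_cases hi : a i = 0
    · simp [hi, apply_ite (fun y : ℂ => y * _)]
    by_cases hj : a j = 0
    · simp [hj]
    by_cases hk : a k = 0
    · simp [hk]
    have h1 := aCoef_le N p α h2N hi
    have h2 := aCoef_le N p α h2N hj
    have h3 := aCoef_le N p α h2N hk
    rw [if_pos (by omega), if_pos (by omega), if_pos (by omega)]
  unfold cubeS
  refine Finset.sum_congr rfl fun uv huv => ?_
  have huv' : uv.1 + uv.2 = m + N - 1 := Finset.HasAntidiagonal.mem_antidiagonal.mp huv
  rw [Finset.sum_mul, Finset.sum_mul]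
  refine Finset.sum_congr rfl fun ij hij => ?_
  have hij' : ij.1 + ij.2 = uv.1 := Finset.HasAntidiagonal.mem_antidiagonal.mp hij
  have := key ij.1 ij.2 (uv.2 + 1) (by omega)
  rw [mul_assoc, mul_assoc] at this ⊢
  exact this

noncomputable def dSeries' (φ : PowerSeries ℂ) : PowerSeries ℂ :=
  PowerSeries.mk fun k => ((k + 1 : ℕ) : ℂ) * PowerSeries.coeff (k + 1) φ

lemma coeff_cube (f : ℕ → ℂ) (n : ℕ) :
    PowerSeries.coeff n (PowerSeries.mk f * PowerSeries.mk f * dSeries' (PowerSeries.mk f)) = cubeS f n := by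
  rw [PowerSeries.coeff_mul]
  refine Finset.sum_congr rfl fun uv huv => ?_
  rw [PowerSeries.coeff_mul]
  simp [dSeries', cubeS]

lemma coeff_XpowN_mul (N n : ℕ) (ψ : PowerSeries ℂ) :
    PowerSeries.coeff n ((PowerSeries.X : PowerSeries ℂ)^N * ψ) = if N ≤ n then PowerSeries.coeff (n - N) ψ else 0 :=
  PowerSeries.coeff_X_pow_mul' ψ N n

lemma coeff_rhs (N n : ℕ) (μc : ℂ) (f : ℕ → ℂ) :
    PowerSeries.coeff n ((N : PowerSeries ℂ) * (PowerSeries.X : PowerSeries ℂ)^(N-1) * (((PowerSeries.X : PowerSeries ℂ)^N)^2 + PowerSeries.C μc * PowerSeries.mk f)) =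
      (N : ℂ) * (if n = (N-1) + 2*N then 1 else 0) +
        (N : ℂ) * μc * (if N - 1 ≤ n then f (n - (N-1)) else 0) := by
  have hc : ((N:ℕ) : PowerSeries ℂ) = PowerSeries.C (N : ℂ) := by
    simp [map_natCast]
  rw [hc, mul_add, ← pow_mul]
  rw [map_add, mul_assoc, PowerSeries.coeff_C_mul]
  have h1 : (PowerSeries.X : PowerSeries ℂ)^(N-1) * (PowerSeries.X : PowerSeries ℂ)^(N*2) = (PowerSeries.X : PowerSeries ℂ)^((N-1) + 2*N) := by
    rw [← pow_add]; ring_nf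
  rw [h1, PowerSeries.coeff_X_pow]
  have h2 : PowerSeries.C (N:ℂ) * (PowerSeries.X : PowerSeries ℂ)^(N-1) * (PowerSeries.C μc * PowerSeries.mk f)
      = PowerSeries.C ((N:ℂ) * μc) * ((PowerSeries.X : PowerSeries ℂ)^(N-1) * PowerSeries.mk f) := by
    rw [map_mul]; ring
  rw [h2, PowerSeries.coeff_C_mul, coeff_XpowN_mul]
  simp

lemma cubeS_small (N p : ℕ) (α : ℂ) (h2N : p < 2 * N) (n : ℕ) (hn : n + 1 < 3 * p) :
    cubeS (aCoef N p α) n = 0 := by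
  set a := aCoef N p α with ha
  unfold cubeS
  refine Finset.sum_eq_zero fun uv huv => ?_
  have huv' : uv.1 + uv.2 = n := Finset.HasAntidiagonal.mem_antidiagonal.mp huv
  rw [Finset.sum_mul]
  refine Finset.sum_eq_zero fun ij hij => ?_
  have hij' : ij.1 + ij.2 = uv.1 := Finset.HasAntidiagonal.mem_antidiagonal.mp hij
  by_cases hi : a ij.1 = 0
  · rw [hi]; ring
  by_cases hj : a ij.2 = 0
  · rw [hj]; ring
  by_cases hk : a (uv.2 + 1) = 0
  · rw [hk]; ring
  exfalso
  have h1 := aCoef_le N p α h2N hi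
  have h2 := aCoef_le N p α h2N hj
  have h3 := aCoef_le N p α h2N hk
  omega

lemma mainEq (N p : ℕ) (α μc : ℂ) (hN : 0 < N) (hp : 0 < p)
    (hlow : N < 2 * p) (h2N : p < 2 * N) (hμ : (N : ℂ) * μc = (p : ℂ)) :
    ((PowerSeries.X : PowerSeries ℂ)^N + PowerSeries.mk (aCoef N p α) * PowerSeries.mk (aCoef N p α)) *
        dSeries' (PowerSeries.mk (aCoef N p α)) =
      (N : PowerSeries ℂ) * (PowerSeries.X : PowerSeries ℂ)^(N-1) *
        (((PowerSeries.X : PowerSeries ℂ)^N)^2 + PowerSeries.C μc * PowerSeries.mk (aCoef N p α)) := by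
  set a := aCoef N p α with ha
  ext n
  rw [coeff_rhs, hμ, add_mul, map_add, coeff_cube, coeff_XpowN_mul]
  have hd : ∀ d, PowerSeries.coeff d (dSeries' (PowerSeries.mk a)) = ((d+1:ℕ):ℂ) * a (d+1) := by
    intro d; simp [dSeries']
  by_cases hbig : N - 1 ≤ n
  · set m := n - (N - 1) with hm
    have hn : n = m + N - 1 := by omega
    -- first term
    have e1 : (if N ≤ n then PowerSeries.coeff (n - N) (dSeries' (PowerSeries.mk a)) else 0)
        = (m : ℂ) * a m := by
      by_cases hNn : N ≤ n
      · rw [if_pos hNn, hd]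
        have : n - N + 1 = m := by omega
        rw [this]
      · have hm0 : m = 0 := by omega
        rw [if_neg hNn, hm0]
        simp
    have e2 : (if n = (N-1) + 2*N then (1:ℂ) else 0) = (if m = 2*N then (1:ℂ) else 0) := by
      congr 1
      simp only [eq_iff_iff]
      omega
    rw [e1, e2, if_pos hbig]
    have hcube : cubeS a n = cubeS (fun x => if x < m then a x else 0) (m + N - 1) := by
      rw [hn]; exact cubeS_trunc N p α hN hlow h2N m
    rw [hcube]
    by_cases hmp : m = p
    · have hz : cubeS (fun x => if x < m then a x else 0) (m + N - 1) = 0 := by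
        apply cubeS_zero
        intro x
        by_cases hx : x < m
        · rw [if_pos hx]
          exact aCoef_vanish N p α h2N x (by omega)
        · rw [if_neg hx]
      rw [hz, hmp, if_neg (by omega)]
      ring
    · have hne : ((m:ℂ) - (p:ℂ)) ≠ 0 := by
        rw [sub_ne_zero]
        exact_mod_cast fun h => hmp (Nat.cast_injective h)
      have hrec : ((m:ℂ) - (p:ℂ)) * a m =
          (if m = 2*N then (N:ℂ) else 0) -
            cubeS (fun x => if x < m then a x else 0) (m + N - 1) := by
        rw [ha, aCoef_eq N p α m hmp]
        field_simp
      have e3 : (N:ℂ) * (if m = 2*N then (1:ℂ) else 0) = (if m = 2*N then (N:ℂ) else 0) := by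
        simp [mul_ite]
      rw [e3]
      linear_combination hrec
  · -- n < N - 1 : everything vanishes
    rw [if_neg (by omega : ¬ N ≤ n), if_neg hbig, if_neg (by omega)]
    rw [cubeS_small N p α h2N n (by omega)]
    ring

lemma dSeries'_eq : dSeries' = dSeries := rfl

lemma shiftP_zero (P : MvPolynomial (Fin 2) ℂ) : shiftP P 0 0 = P := by
  have h : ![(X 0 : MvPolynomial (Fin 2) ℂ) + C 0, (X 1 : MvPolynomial (Fin 2) ℂ) + C 0]
      = (X : Fin 2 → MvPolynomial (Fin 2) ℂ) := by
    funext i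
    fin_cases i <;> simp
  rw [shiftP, h]
  exact MvPolynomial.aeval_X_left_apply P

lemma substS_Q (N : ℕ) (φ : PowerSeries ℂ) :
    substS ((X 0 : MvPolynomial (Fin 2) ℂ) + X 1 ^ 2) N φ
      = (PowerSeries.X : PowerSeries ℂ)^N + φ * φ := by
  simp [substS, sq]

lemma substS_P (N : ℕ) (μc : ℂ) (φ : PowerSeries ℂ) :
    substS ((X 0 : MvPolynomial (Fin 2) ℂ) ^ 2 + C μc * X 1) N φ
      = ((PowerSeries.X : PowerSeries ℂ)^N)^2 + PowerSeries.C μc * φ := by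
  simp only [substS, map_add, map_pow, map_mul, MvPolynomial.aeval_X, MvPolynomial.aeval_C,
    Matrix.cons_val_zero, Matrix.cons_val_one, Matrix.head_cons]
  rw [PowerSeries.algebraMap_apply (R := ℂ)]
  simp

end Aux

/-- **(paper, example).** For `(z + w²)·dw/dz = z² + μ·w` with `μ ∈ ℚ`, `1/2 < μ < 2`,
the point `(0,0)` is algebraic critical: for every `α ≠ 0` there is a local algebraic
solution of the form `w(z) = α·z^μ + (terms with strictly larger exponents)`. -/
theorem example_critical_half_two (μ : ℚ) (h1 : 1 / 2 < μ) (h2 : μ < 2) :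
    IsAlgCritical ((X 0 : MvPolynomial (Fin 2) ℂ) ^ 2 + C (μ : ℂ) * X 1)
      ((X 0 : MvPolynomial (Fin 2) ℂ) + X 1 ^ 2) 0 0 ∧
    ∀ α : ℂ, α ≠ 0 →
      ∃ c ∈ localSols ((X 0 : MvPolynomial (Fin 2) ℂ) ^ 2 + C (μ : ℂ) * X 1)
          ((X 0 : MvPolynomial (Fin 2) ℂ) + X 1 ^ 2) 0 0,
        c μ = α ∧ ∀ q : ℚ, q < μ → c q = 0 := by
  have hμ0 : 0 < μ := lt_trans (by norm_num) h1
  set N := μ.den with hNdef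
  set p := μ.num.toNat with hpdef
  have hN : 0 < N := μ.pos
  have hnum : 0 < μ.num := Rat.num_pos.mpr hμ0
  have hpQ : ((p : ℕ) : ℚ) = (μ.num : ℚ) := by
    rw [hpdef]; exact_mod_cast congrArg (Int.cast : ℤ → ℚ) (Int.toNat_of_nonneg hnum.le)
  have hmulden : μ * (N : ℚ) = (p : ℚ) := by rw [hpQ]; exact_mod_cast Rat.mul_den_eq_num μ
  have hNQ : ((N : ℕ) : ℚ) ≠ 0 := by positivity
  have hμeq : μ = (p : ℚ) / (N : ℚ) := by field_simp [← hmulden]; exact hmulden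
  have hlow : N < 2 * p := by
    have hh : ((N : ℕ) : ℚ) < 2 * ((p : ℕ) : ℚ) := by
      rw [← hmulden]
      have hN0 : (0:ℚ) < (N : ℚ) := by positivity
      nlinarith
    exact_mod_cast hh
  have h2N : p < 2 * N := by
    have hh : ((p : ℕ) : ℚ) < 2 * ((N : ℕ) : ℚ) := by
      rw [← hmulden]
      have hN0 : (0:ℚ) < (N : ℚ) := by positivity
      nlinarith
    exact_mod_cast hh
  have hp : 0 < p := by omega
  have hμc : ((N : ℕ) : ℂ) * ((μ : ℚ) : ℂ) = ((p : ℕ) : ℂ) := by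
    have h := congrArg (fun q : ℚ => (q : ℂ)) hmulden
    push_cast at h ⊢
    linear_combination h
  have main : ∀ α : ℂ, α ≠ 0 →
      ∃ c ∈ localSols ((X 0 : MvPolynomial (Fin 2) ℂ) ^ 2 + C (μ : ℂ) * X 1)
          ((X 0 : MvPolynomial (Fin 2) ℂ) + X 1 ^ 2) 0 0,
        c μ = α ∧ ∀ q : ℚ, q < μ → c q = 0 := by
    intro α hα
    set a := aCoef N p α with hadef
    set c : ℚ → ℂ := fun q => if 0 < q ∧ (q * (N:ℚ)).den = 1 then a (q * (N:ℚ)).num.toNat else 0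
      with hcdef
    have hA : ∀ k : ℕ, c ((k : ℚ) / (N : ℚ)) = a k := by
      intro k
      have hqN : ((k : ℚ) / (N : ℚ)) * (N : ℚ) = (k : ℚ) := div_mul_cancel₀ _ hNQ
      rcases Nat.eq_zero_or_pos k with hk | hk
      · subst hk
        rw [hcdef]
        simp only [Nat.cast_zero, zero_div]
        rw [if_neg (by norm_num)]
        exact (aCoef_vanish N p α h2N 0 hp).symm
      · have hpos : 0 < (k : ℚ) / (N : ℚ) := by positivity
        rw [hcdef]
        simp only [hqN]
        rw [if_pos ⟨hpos, Rat.den_natCast k⟩]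
        norm_num
    have hts : toSeries N c = PowerSeries.mk a := by
      ext k
      rw [toSeries, PowerSeries.coeff_mk, PowerSeries.coeff_mk]
      exact hA k
    have hcμ : c μ = α := by
      rw [hμeq, hA p, hadef]
      exact aCoef_p N p α
    have hsupp : ∀ q : ℚ, c q ≠ 0 → 0 < q ∧ ∃ k : ℕ, q = (k : ℚ) / (N : ℚ) := by
      intro q hq
      rw [hcdef] at hq
      by_cases hcond : 0 < q ∧ (q * (N:ℚ)).den = 1
      · refine ⟨hcond.1, (q * (N:ℚ)).num.toNat, ?_⟩
        have hnn : 0 ≤ (q * (N:ℚ)).num := Rat.num_nonneg.mpr (le_of_lt (mul_pos hcond.1 (by positivity)))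
        have hint : (((q * (N:ℚ)).num : ℤ) : ℚ) = q * (N:ℚ) := by
          conv_rhs => rw [← Rat.num_div_den (q * (N:ℚ)), hcond.2]
          simp
        have : (((q * (N:ℚ)).num.toNat : ℕ) : ℚ) = q * (N:ℚ) := by
          rw [← hint]; exact_mod_cast congrArg (Int.cast : ℤ → ℚ) (Int.toNat_of_nonneg hnn)
        rw [this]
        field_simp
      · simp only [if_neg hcond] at hq
        exact absurd rfl hq
    refine ⟨c, ⟨?_, ?_⟩, hcμ, ?_⟩
    · intro h0
      exact hα (by rw [← hcμ, h0]; rfl)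
    · refine ⟨N, hN, hsupp, ?_⟩
      rw [shiftP_zero, shiftP_zero, hts, substS_Q, substS_P, ← dSeries'_eq]
      exact mainEq N p α ((μ : ℚ) : ℂ) hN hp hlow h2N hμc
    · intro q hq
      by_contra hne
      rw [hcdef] at hne
      by_cases hcond : 0 < q ∧ (q * (N:ℚ)).den = 1
      · simp only [if_pos hcond] at hne
        have hle : p ≤ (q * (N:ℚ)).num.toNat := aCoef_le N p α h2N hne
        have hnn : 0 ≤ (q * (N:ℚ)).num := Rat.num_nonneg.mpr (le_of_lt (mul_pos hcond.1 (by positivity)))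
        have hint : (((q * (N:ℚ)).num : ℤ) : ℚ) = q * (N:ℚ) := by
          conv_rhs => rw [← Rat.num_div_den (q * (N:ℚ)), hcond.2]
          simp
        have hge : (p : ℚ) ≤ q * (N:ℚ) := by
          rw [← hint]
          have : ((p:ℕ) : ℤ) ≤ (q * (N:ℚ)).num := by omega
          exact_mod_cast this
        have hlt : q * (N:ℚ) < (p : ℚ) := by
          rw [← hmulden]
          have hN0 : (0:ℚ) < (N : ℚ) := by positivity
          nlinarith
        linarith
      · exact hne (show (if 0 < q ∧ (q * (N:ℚ)).den = 1 then a (q * (N:ℚ)).num.toNat else 0) = 0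
          from if_neg hcond)
  refine ⟨?_, main⟩
  apply Set.infinite_of_injective_forall_mem
    (f := fun n : ℕ => (main ((n : ℂ) + 1) (by
      have : (0:ℝ) < (n:ℝ) + 1 := by positivity
      intro h
      have := congrArg Complex.re h
      simp at this
      linarith)).choose)
  · intro n1 n2 h
    have s1 := (main ((n1 : ℂ) + 1) (by
      have : (0:ℝ) < (n1:ℝ) + 1 := by positivity
      intro hh
      have := congrArg Complex.re hh
      simp at this
      linarith)).choose_spec
    have s2 := (main ((n2 : ℂ) + 1) (by
      have : (0:ℝ) < (n2:ℝ) + 1 := by positivity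
      intro hh
      have := congrArg Complex.re hh
      simp at this
      linarith)).choose_spec
    have hv : ((n1 : ℂ) + 1) = ((n2 : ℂ) + 1) := by
      rw [← s1.2.1, ← s2.2.1]
      exact congrFun h μ
    have : (n1 : ℂ) = (n2 : ℂ) := by linear_combination hv
    exact_mod_cast this
  · intro n
    exact (main ((n : ℂ) + 1) (by
      have : (0:ℝ) < (n:ℝ) + 1 := by positivity
      intro hh
      have := congrArg Complex.re hh
      simp at this
      linarith)).choose_spec.1
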